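/- Let H be a Hermitian d×d complex matrix, Δ > 0, and v a unit vector in ℂ^d such that H v = 0 and ⟨w, H w⟩ ≥ Δ‖w‖² for every vector w orthogonal to v. Fix a threshold fidelity F_T, an estimation error ε > 0 and a failure probability α ∈ (0,1). Let ρ be a density matrix on ℂ^d with fidelity F = ⟨v, ρ v⟩, let F_min = 1 − Tr[Hρ]/Δ, and let F* : Ω → ℝ be a random variable on a probability space (Ω, P) satisfying P[|F* − F_min| ≤ ε] ≥ 1 − α. If F < F_T, then P[F* < F_T + ε] ≥ 1 − α, i.e., the test that rejects when F* < F_T + ε rejects ρ with probability at least 1 − α. (Soundness of the certification protocol.) -/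

import Mathlib

open Matrix MeasureTheory
open scoped ComplexOrder

/-!
The gap condition says that `H ≥ Δ (1 - v vᴴ)` in the Loewner order. Pairing this with the
density matrix `ρ ≥ 0` gives `Tr[Hρ] ≥ Δ (1 - F)`, that is `F_min ≤ F`. Hence on the event
`|F* - F_min| ≤ ε`, which has probability at least `1 - α`, we get `F* ≤ F + ε < F_T + ε`.
-/

namespace Matrix

variable {n : Type*} [Fintype n]

lemma trace_vecMulVec_mul {R : Type*} [CommSemiring R] (a b : n → R) (M : Matrix n n R) :
    (vecMulVec a b * M).trace = b ⬝ᵥ (M *ᵥ a) := by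
  rw [vecMulVec_mul, trace_vecMulVec, dotProduct_comm, dotProduct_mulVec]

variable {𝕜 : Type*} [RCLike 𝕜]

lemma PosSemidef.of_re_dotProduct_mulVec_nonneg {M : Matrix n n 𝕜} (hM : M.IsHermitian)
    (h : ∀ x, 0 ≤ RCLike.re (star x ⬝ᵥ (M *ᵥ x))) : M.PosSemidef :=
  .of_dotProduct_mulVec_nonneg hM fun x =>
    RCLike.nonneg_iff.mpr ⟨h x, hM.im_star_dotProduct_mulVec_self x⟩

lemma PosSemidef.trace_mul_nonneg {A B : Matrix n n 𝕜} (hA : A.PosSemidef) (hB : B.PosSemidef) :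
    0 ≤ (A * B).trace := by
  classical
  obtain ⟨C, rfl⟩ : ∃ C : Matrix n n 𝕜, B = Cᴴ * C := by
    open MatrixOrder in exact CStarAlgebra.nonneg_iff_eq_star_mul_self.mp hB.nonneg
  rw [← Matrix.mul_assoc, trace_mul_comm, ← Matrix.mul_assoc]
  exact (hA.mul_mul_conjTranspose_same C).trace_nonneg

end Matrix

section GroundState

variable {n : Type*} [Fintype n] [DecidableEq n] {H : Matrix n n ℂ} {v : n → ℂ} {Δ : ℝ}

lemma dotProduct_mulVec_sub_smul_one_sub_vecMulVec (hH : H.IsHermitian)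
    (hv : star v ⬝ᵥ v = 1) (hground : H *ᵥ v = 0) (x : n → ℂ) :
    let w := x - (star v ⬝ᵥ x) • v
    star x ⬝ᵥ ((H - Δ • (1 - vecMulVec v (star v))) *ᵥ x)
      = star w ⬝ᵥ (H *ᵥ w) - Δ * (star w ⬝ᵥ w) := by
  intro w
  have hvw : star v ⬝ᵥ w = 0 := by
    simp [w, dotProduct_sub, dotProduct_smul, hv]
  have hvHw : star v ⬝ᵥ (H *ᵥ w) = 0 := by
    rw [dotProduct_mulVec, ← hH.eq, ← star_mulVec, hground, star_zero, zero_dotProduct]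
  have hMx : (H - Δ • (1 - vecMulVec v (star v))) *ᵥ x = H *ᵥ w - Δ • w := by
    rw [sub_mulVec, smul_mulVec, sub_mulVec, one_mulVec, vecMulVec_mulVec, op_smul_eq_smul]
    simp only [w, mulVec_sub, mulVec_smul, hground, smul_zero, sub_zero]
  have hx : star x = star w + star (star v ⬝ᵥ x) • star v := by simp [w]
  rw [hMx, hx, add_dotProduct, smul_dotProduct, dotProduct_sub, dotProduct_sub, dotProduct_smul,
    dotProduct_smul, hvw, hvHw]
  simp

lemma posSemidef_sub_smul_one_sub_vecMulVec (hH : H.IsHermitian) (hv : star v ⬝ᵥ v = 1)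
    (hground : H *ᵥ v = 0)
    (hgap : ∀ w : n → ℂ, star v ⬝ᵥ w = 0 →
      Δ * (star w ⬝ᵥ w).re ≤ (star w ⬝ᵥ (H *ᵥ w)).re) :
    (H - Δ • (1 - vecMulVec v (star v))).PosSemidef := by
  refine .of_re_dotProduct_mulVec_nonneg ?_ fun x => ?_
  · exact hH.sub ((isHermitian_one.sub (posSemidef_vecMulVec_self_star v).isHermitian).smul
      (IsSelfAdjoint.all Δ))
  · rw [dotProduct_mulVec_sub_smul_one_sub_vecMulVec hH hv hground, RCLike.re_to_complex,
      Complex.sub_re, Complex.re_ofReal_mul, sub_nonneg]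
    exact hgap _ (by simp [dotProduct_sub, dotProduct_smul, hv])

lemma mul_one_sub_re_dotProduct_mulVec_le_re_trace_mul (hH : H.IsHermitian)
    (hv : star v ⬝ᵥ v = 1) (hground : H *ᵥ v = 0)
    (hgap : ∀ w : n → ℂ, star v ⬝ᵥ w = 0 →
      Δ * (star w ⬝ᵥ w).re ≤ (star w ⬝ᵥ (H *ᵥ w)).re)
    {ρ : Matrix n n ℂ} (hρ : ρ.PosSemidef) (hρtr : ρ.trace = 1) :
    Δ * (1 - (star v ⬝ᵥ (ρ *ᵥ v)).re) ≤ ((H * ρ).trace).re := by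
  have h := ((posSemidef_sub_smul_one_sub_vecMulVec hH hv hground hgap).trace_mul_nonneg hρ).1
  rw [sub_mul, trace_sub, smul_mul, trace_smul, sub_mul, one_mul, trace_sub, hρtr,
    trace_vecMulVec_mul] at h
  simpa using h

end GroundState

theorem certification_soundness_general {d : ℕ} (H : Matrix (Fin d) (Fin d) ℂ)
    (hH : H.IsHermitian) (Δ : ℝ) (hΔ : 0 < Δ) (v : Fin d → ℂ)
    (hv : star v ⬝ᵥ v = 1) (hground : H *ᵥ v = 0)
    (hgap : ∀ w : Fin d → ℂ, star v ⬝ᵥ w = 0 →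
      Δ * (star w ⬝ᵥ w).re ≤ (star w ⬝ᵥ (H *ᵥ w)).re)
    (F_T ε α : ℝ)
    (ρ : Matrix (Fin d) (Fin d) ℂ) (hρ : ρ.PosSemidef) (hρtr : ρ.trace = 1)
    {Ω : Type*} [MeasurableSpace Ω] (P : Measure Ω)
    (Fstar : Ω → ℝ)
    (hest : ENNReal.ofReal (1 - α) ≤
      P {ω | |Fstar ω - (1 - ((H * ρ).trace).re / Δ)| ≤ ε})
    (hF : (star v ⬝ᵥ (ρ *ᵥ v)).re < F_T) :
    ENNReal.ofReal (1 - α) ≤ P {ω | Fstar ω < F_T + ε} := by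
  have hFmin : 1 - ((H * ρ).trace).re / Δ ≤ (star v ⬝ᵥ (ρ *ᵥ v)).re := by
    rw [sub_le_comm, le_div_iff₀' hΔ]
    exact mul_one_sub_re_dotProduct_mulVec_le_re_trace_mul hH hv hground hgap hρ hρtr
  refine hest.trans (measure_mono fun ω hω => ?_)
  simp only [Set.mem_ofPred_eq] at hω ⊢
  linarith [(abs_le.mp hω).2]

/-- Soundness of the certification protocol. If the random estimate `F*`
of `F_min = 1 - Tr[Hρ]/Δ` satisfies `P[|F* - F_min| ≤ ε] ≥ 1 - α`, and the fidelity
`F = ⟨v, ρ v⟩` of `ρ` with the unique ground state `v` of the Hermitian Hamiltonian `H`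
(gap `≥ Δ`) satisfies `F < F_T`, then the test rejects with probability at least
`1 - α`: `P[F* < F_T + ε] ≥ 1 - α`. -/
theorem certification_soundness {d : ℕ} (H : Matrix (Fin d) (Fin d) ℂ)
    (hH : H.IsHermitian) (Δ : ℝ) (hΔ : 0 < Δ) (v : Fin d → ℂ)
    (hv : star v ⬝ᵥ v = 1) (hground : H *ᵥ v = 0)
    (hgap : ∀ w : Fin d → ℂ, star v ⬝ᵥ w = 0 →
      Δ * (star w ⬝ᵥ w).re ≤ (star w ⬝ᵥ (H *ᵥ w)).re)
    (F_T ε α : ℝ) (hε : 0 < ε) (hα : α ∈ Set.Ioo (0 : ℝ) 1)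
    (ρ : Matrix (Fin d) (Fin d) ℂ) (hρ : ρ.PosSemidef) (hρtr : ρ.trace = 1)
    {Ω : Type*} [MeasurableSpace Ω] (P : Measure Ω) [IsProbabilityMeasure P]
    (Fstar : Ω → ℝ)
    (hest : ENNReal.ofReal (1 - α) ≤
      P {ω | |Fstar ω - (1 - ((H * ρ).trace).re / Δ)| ≤ ε})
    (hF : (star v ⬝ᵥ (ρ *ᵥ v)).re < F_T) :
    ENNReal.ofReal (1 - α) ≤ P {ω | Fstar ω < F_T + ε} :=
  certification_soundness_general H hH Δ hΔ v hv hground hgap F_T ε α ρ hρ hρtr P Fstar hest hF
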